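/- Let X be finite, p a probability distribution on X (not necessarily full support), π_θ a differentiable family of distributions with π_θ(x) > 0 for all x and θ, and f:(0,∞)→ℝ convex differentiable with f(1)=0 such that f'(∞) := lim_{t→0⁺} t·f(1/t) is finite. Then ∇_θ [ Σ_{x: p(x)>0} p(x)·f(π_θ(x)/p(x)) + f'(∞)·π_θ({p=0}) ] = Σ_{x: p(x)>0} π_θ(x)·f'(π_θ(x)/p(x))·∇_θ log π_θ(x) + Σ_{x: p(x)=0} π_θ(x)·f'(∞)·∇_θ log π_θ(x). -/

import Mathlib

open Filter Topology

/-! Both sides are computed termwise by the chain rule: the summand `p x * f (π x / p x)` has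
gradient `f' (π x / p x) • ∇π x`, and the log-derivative identity `π x • ∇ log π x = ∇π x`
turns each term on the right into the same expression. -/

section

variable {E : Type*} [NormedAddCommGroup E] [NormedSpace ℝ E]

theorem smul_fderiv_log_eq_fderiv {g : E → ℝ} {θ : E} (hg : DifferentiableAt ℝ g θ)
    (hg0 : g θ ≠ 0) :
    g θ • fderiv ℝ (fun y => Real.log (g y)) θ = fderiv ℝ g θ := by
  rw [(hg.hasFDerivAt.log hg0).fderiv, smul_smul, mul_inv_cancel₀ hg0, one_smul]

theorem hasFDerivAt_mul_comp_div {g : E → ℝ} {φ : ℝ → ℝ} {θ : E} {a : ℝ}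
    (hg : DifferentiableAt ℝ g θ) (hφ : DifferentiableAt ℝ φ (g θ / a)) (ha : a ≠ 0) :
    HasFDerivAt (fun y => a * φ (g y / a)) (deriv φ (g θ / a) • fderiv ℝ g θ) θ := by
  have hdiv : HasFDerivAt (fun y => g y / a) (a⁻¹ • fderiv ℝ g θ) θ := by
    simpa only [div_eq_mul_inv] using hg.hasFDerivAt.mul_const a⁻¹
  have h := (hφ.hasDerivAt.comp_hasFDerivAt θ hdiv).const_mul a
  rwa [smul_smul, smul_smul, mul_right_comm, mul_inv_cancel₀ ha, one_mul] at h

end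

theorem stmt_11_general {d : ℕ} {X : Type*} [Fintype X]
    (p : X → ℝ)
    (π : (Fin d → ℝ) → X → ℝ)
    (hpos : ∀ θ x, 0 < π θ x)
    (hdiff : ∀ x, Differentiable ℝ (fun θ => π θ x))
    (f : ℝ → ℝ)
    (hfd : DifferentiableOn ℝ f (Set.Ioi (0:ℝ)))
    (c : ℝ)
    (θ : Fin d → ℝ) :
    fderiv ℝ (fun θ' =>
        (∑ x ∈ Finset.univ.filter (fun x => 0 < p x), p x * f (π θ' x / p x))
          + c * ∑ x ∈ Finset.univ.filter (fun x => p x = 0), π θ' x) θ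
      = (∑ x ∈ Finset.univ.filter (fun x => 0 < p x),
            (π θ x * deriv f (π θ x / p x)) • fderiv ℝ (fun θ' => Real.log (π θ' x)) θ)
        + ∑ x ∈ Finset.univ.filter (fun x => p x = 0),
            (π θ x * c) • fderiv ℝ (fun θ' => Real.log (π θ' x)) θ := by
  have hlog (x : X) : π θ x • fderiv ℝ (fun θ' => Real.log (π θ' x)) θ
      = fderiv ℝ (fun θ' => π θ' x) θ :=
    smul_fderiv_log_eq_fderiv (hdiff x θ) (hpos θ x).ne'
  have hsupp : HasFDerivAt
      (fun θ' => ∑ x ∈ Finset.univ.filter (fun x => 0 < p x), p x * f (π θ' x / p x))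
      (∑ x ∈ Finset.univ.filter (fun x => 0 < p x),
        deriv f (π θ x / p x) • fderiv ℝ (fun θ' => π θ' x) θ) θ := by
    refine HasFDerivAt.fun_sum fun x hx => ?_
    have hpx : 0 < p x := (Finset.mem_filter.mp hx).2
    exact hasFDerivAt_mul_comp_div (hdiff x θ)
      (hfd.differentiableAt (Ioi_mem_nhds (div_pos (hpos θ x) hpx))) hpx.ne'
  have hnull : HasFDerivAt
      (fun θ' => c * ∑ x ∈ Finset.univ.filter (fun x => p x = 0), π θ' x)
      (c • ∑ x ∈ Finset.univ.filter (fun x => p x = 0), fderiv ℝ (fun θ' => π θ' x) θ) θ :=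
    (HasFDerivAt.fun_sum fun x _ => (hdiff x θ).hasFDerivAt).const_mul c
  rw [(hsupp.fun_add hnull).fderiv, Finset.smul_sum]
  congr 1 <;> refine Finset.sum_congr rfl fun x _ => ?_ <;> rw [mul_comm, mul_smul, hlog]

theorem stmt_11 {d : ℕ} {X : Type*} [Fintype X] [DecidableEq X]
    (p : X → ℝ) (hpnn : ∀ x, 0 ≤ p x) (hpsum : ∑ x, p x = 1)
    (π : (Fin d → ℝ) → X → ℝ)
    (hpos : ∀ θ x, 0 < π θ x)
    (hdiff : ∀ x, Differentiable ℝ (fun θ => π θ x))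
    (hπsum : ∀ θ, ∑ x, π θ x = 1)
    (f : ℝ → ℝ) (hf : ConvexOn ℝ (Set.Ioi (0:ℝ)) f)
    (hfd : DifferentiableOn ℝ f (Set.Ioi (0:ℝ))) (hf1 : f 1 = 0)
    (c : ℝ) (hc : Tendsto (fun t : ℝ => t * f (1 / t)) (𝓝[>] (0:ℝ)) (nhds c))
    (θ : Fin d → ℝ) :
    fderiv ℝ (fun θ' =>
        (∑ x ∈ Finset.univ.filter (fun x => 0 < p x), p x * f (π θ' x / p x))
          + c * ∑ x ∈ Finset.univ.filter (fun x => p x = 0), π θ' x) θ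
      = (∑ x ∈ Finset.univ.filter (fun x => 0 < p x),
            (π θ x * deriv f (π θ x / p x)) • fderiv ℝ (fun θ' => Real.log (π θ' x)) θ)
        + ∑ x ∈ Finset.univ.filter (fun x => p x = 0),
            (π θ x * c) • fderiv ℝ (fun θ' => Real.log (π θ' x)) θ :=
  stmt_11_general p π hpos hdiff f hfd c θ
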